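/- Let K₃(t,r) = (4πt)^(−3/2) e^(−r²/(4t) − t) · r/sinh r and Z(r) = coth r − 1/r. Then for all t > 0 and r ≥ 0, |∂ᵣ log K₃(t,r)| = √(∂ₜ log K₃(t,r) + 3/(2t) + 1) + Z(2t√(∂ₜ log K₃(t,r) + 3/(2t) + 1)). -/

import Mathlib

open Real

noncomputable def Z : ℝ → ℝ := fun r => Real.cosh r / Real.sinh r - 1 / r

/-- The heat kernel of the 3-dimensional hyperbolic space (with the factor
`r / sinh r` extended continuously by `1` at `r = 0`). -/
noncomputable def K3 : ℝ → ℝ → ℝ := fun t r =>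
  (4 * π * t) ^ (-(3 : ℝ) / 2) * Real.exp (-r ^ 2 / (4 * t) - t) *
    (if r = 0 then 1 else r / Real.sinh r)

/-!
Both logarithmic derivatives of `K3` are explicit: `∂ₜ log K3 = -3/(2t) + r²/(4t²) - 1` and, for
`r > 0`, `∂ᵣ log K3 = -r/(2t) - Z r`. Hence the square root on the right-hand side is `r/(2t)`,
its multiple by `2t` is `r`, and the identity reduces to `|r/(2t) + Z r| = r/(2t) + Z r`, which
holds because `Z r ≥ 0` (equivalently `tanh r ≤ r`). At `r = 0` both sides vanish, the left one
because `K3 t` is even in `r`.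
-/

lemma deriv_eq_zero_of_even {f : ℝ → ℝ} (hf : ∀ x, f (-x) = f x) : deriv f 0 = 0 := by
  have h : deriv f 0 = -deriv f 0 := by
    simpa only [hf, neg_zero] using deriv_comp_neg (f := f) (x := 0)
  linarith

lemma sinh_le_mul_cosh {r : ℝ} (hr : 0 ≤ r) : sinh r ≤ r * cosh r := by
  rcases hr.eq_or_lt with rfl | hr
  · simp
  obtain ⟨c, ⟨hc0, hcr⟩, hc⟩ := exists_hasDerivAt_eq_slope sinh cosh hr
    continuous_sinh.continuousOn fun x _ => hasDerivAt_sinh x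
  have hcosh : cosh c ≤ cosh r := cosh_le_cosh.mpr <| by
    rw [abs_of_pos hc0, abs_of_pos hr]; exact hcr.le
  rw [sinh_zero, sub_zero, sub_zero, eq_div_iff hr.ne'] at hc
  nlinarith

lemma Z_nonneg {r : ℝ} (hr : 0 < r) : 0 ≤ Z r := by
  have hsinh : 0 < sinh r := sinh_pos_iff.mpr hr
  rw [Z, sub_nonneg, div_le_div_iff₀ hr hsinh, one_mul, mul_comm]
  exact sinh_le_mul_cosh hr.le

lemma K3_neg (t r : ℝ) : K3 t (-r) = K3 t r := by
  simp [K3, sinh_neg, neg_div_neg_eq]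

lemma log_K3 {t : ℝ} (ht : 0 < t) (r : ℝ) :
    log (K3 t r) = -(3 / 2) * log (4 * π * t) + (-r ^ 2 / (4 * t) - t)
      + log (if r = 0 then 1 else r / sinh r) := by
  have hfactor : (if r = 0 then 1 else r / sinh r) ≠ 0 := by
    split_ifs with h
    · exact one_ne_zero
    · exact div_ne_zero h (sinh_ne_zero.mpr h)
  rw [K3, log_mul (by positivity) hfactor, log_mul (by positivity) (exp_ne_zero _), log_exp,
    log_rpow (by positivity)]
  norm_num

lemma hasDerivAt_log_div_sinh {r : ℝ} (hr : 0 < r) :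
    HasDerivAt (fun s => log (s / sinh s)) (-Z r) r := by
  have hsinh : 0 < sinh r := sinh_pos_iff.mpr hr
  refine ((hasDerivAt_id' r).fun_div (hasDerivAt_sinh r) hsinh.ne').log
    (div_pos hr hsinh).ne' |>.congr_deriv ?_
  rw [Z]
  field_simp
  ring

lemma hasDerivAt_log_K3_time {t : ℝ} (ht : 0 < t) (r : ℝ) :
    HasDerivAt (fun s => log (K3 s r)) (-(3 / (2 * t)) + r ^ 2 / (4 * t ^ 2) - 1) t := by
  have hlog : HasDerivAt (fun s => log (4 * π * s)) (1 / t) t :=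
    ((hasDerivAt_id' t).const_mul (4 * π)).log (by positivity) |>.congr_deriv (by field_simp)
  have hgauss : HasDerivAt (fun s => -r ^ 2 / (4 * s) - s) (r ^ 2 / (4 * t ^ 2) - 1) t :=
    ((hasDerivAt_const t (-r ^ 2)).fun_div ((hasDerivAt_id' t).const_mul 4)
      (by positivity)).fun_sub (hasDerivAt_id' t) |>.congr_deriv (by field_simp; ring)
  have hmodel := ((hlog.const_mul (-(3 / 2))).add hgauss).add_const
    (log (if r = 0 then 1 else r / sinh r))
  refine (hmodel.congr_of_eventuallyEq ?_).congr_deriv ?_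
  · filter_upwards [eventually_gt_nhds ht] with s hs using log_K3 hs r
  · field_simp
    ring

lemma hasDerivAt_log_K3_radius {t r : ℝ} (ht : 0 < t) (hr : 0 < r) :
    HasDerivAt (fun s => log (K3 t s)) (-(r / (2 * t)) - Z r) r := by
  have hgauss : HasDerivAt (fun s => -s ^ 2 / (4 * t) - t) (-(r / (2 * t))) r :=
    ((hasDerivAt_pow 2 r).fun_neg.div_const (4 * t)).sub_const t |>.congr_deriv
      (by field_simp; ring)
  have hmodel := (hgauss.const_add (-(3 / 2) * log (4 * π * t))).fun_add
    (hasDerivAt_log_div_sinh hr)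
  refine (hmodel.congr_of_eventuallyEq ?_).congr_deriv (sub_eq_add_neg _ _).symm
  filter_upwards [eventually_ne_nhds hr.ne'] with s hs
  rw [log_K3 ht, if_neg hs]

theorem stmt_13 (t : ℝ) (ht : 0 < t) (r : ℝ) (hr : 0 ≤ r) :
    |deriv (fun s => Real.log (K3 t s)) r|
      = Real.sqrt (deriv (fun s => Real.log (K3 s r)) t + 3 / (2 * t) + 1)
        + Z (2 * t * Real.sqrt (deriv (fun s => Real.log (K3 s r)) t + 3 / (2 * t) + 1)) := by
  have htime : deriv (fun s => log (K3 s r)) t + 3 / (2 * t) + 1 = (r / (2 * t)) ^ 2 := by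
    rw [(hasDerivAt_log_K3_time ht r).deriv]
    field_simp
    ring
  rw [htime, sqrt_sq (by positivity), mul_div_cancel₀ r (by positivity)]
  rcases hr.eq_or_lt with rfl | hpos
  · rw [deriv_eq_zero_of_even fun x => by simp only [K3_neg]]
    simp [Z]
  · have hslope : 0 < r / (2 * t) := by positivity
    rw [(hasDerivAt_log_K3_radius ht hpos).deriv,
      abs_of_nonpos (by linarith [Z_nonneg hpos])]
    ring
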